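/- arXiv:1602.08180 — 5 statements merged into one kernel-verified Lean document; each statement's English description precedes it below -/
import Mathlib

section
/- Let φ, ψ be smooth functions of (x,y,z) on an open set with φ_z ≠ 0, sin φ ≠ 0, cos φ ≠ 0, satisfying ψ_{xz} = -φ_{xz}·cot φ and ψ_{yz} = φ_{yz}·tan φ. Define := -φ_{xz}/(φ_z sin φ) and B̂ := φ_{yz}/(φ_z cos φ). Then the integrability condition (φ_{xz})_y = (φ_{yz})_x implies (Â_y - B̂ φ_x) sin φ + (B̂_x + Â φ_y) cos φ = 0, and the integrability condition (ψ_{xz})_y = (ψ_{yz})_x implies (Â_y - B̂ φ_x) cos φ - (B̂_x + Â φ_y) sin φ = -ÂB̂. -/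
open Real

noncomputable def px (f : ℝ → ℝ → ℝ → ℝ) (x y z : ℝ) : ℝ := deriv (fun t => f t y z) x
noncomputable def py (f : ℝ → ℝ → ℝ → ℝ) (x y z : ℝ) : ℝ := deriv (fun t => f x t z) y
noncomputable def pz (f : ℝ → ℝ → ℝ → ℝ) (x y z : ℝ) : ℝ := deriv (fun t => f x y t) z

noncomputable def unc (f : ℝ → ℝ → ℝ → ℝ) : ℝ × ℝ × ℝ → ℝ := fun p => f p.1 p.2.1 p.2.2

lemma lineX (y z x : ℝ) : HasDerivAt (fun t : ℝ => ((t, y, z) : ℝ × ℝ × ℝ)) (1, 0, 0) x :=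
  (hasDerivAt_id x).prodMk (hasDerivAt_const x (y, z))

lemma lineY (x z y : ℝ) : HasDerivAt (fun t : ℝ => ((x, t, z) : ℝ × ℝ × ℝ)) (0, 1, 0) y :=
  (hasDerivAt_const y x).prodMk ((hasDerivAt_id y).prodMk (hasDerivAt_const y z))

lemma lineZ (x y z : ℝ) : HasDerivAt (fun t : ℝ => ((x, y, t) : ℝ × ℝ × ℝ)) (0, 0, 1) z :=
  (hasDerivAt_const z x).prodMk ((hasDerivAt_const z y).prodMk (hasDerivAt_id z))

lemma sliceX {f : ℝ → ℝ → ℝ → ℝ} (hf : ContDiff ℝ (⊤ : ℕ∞) (unc f)) (x y z : ℝ) :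
    HasDerivAt (fun t => f t y z) (fderiv ℝ (unc f) (x, y, z) (1, 0, 0)) x :=
  by have := ((hf.differentiable (by simp) (x, y, z)).hasFDerivAt).comp_hasDerivAt x (lineX y z x); exact this

lemma sliceY {f : ℝ → ℝ → ℝ → ℝ} (hf : ContDiff ℝ (⊤ : ℕ∞) (unc f)) (x y z : ℝ) :
    HasDerivAt (fun t => f x t z) (fderiv ℝ (unc f) (x, y, z) (0, 1, 0)) y :=
  by have := ((hf.differentiable (by simp) (x, y, z)).hasFDerivAt).comp_hasDerivAt y (lineY x z y); exact this

lemma sliceZ {f : ℝ → ℝ → ℝ → ℝ} (hf : ContDiff ℝ (⊤ : ℕ∞) (unc f)) (x y z : ℝ) :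
    HasDerivAt (fun t => f x y t) (fderiv ℝ (unc f) (x, y, z) (0, 0, 1)) z :=
  by have := ((hf.differentiable (by simp) (x, y, z)).hasFDerivAt).comp_hasDerivAt z (lineZ x y z); exact this

lemma px_eq {f : ℝ → ℝ → ℝ → ℝ} (hf : ContDiff ℝ (⊤ : ℕ∞) (unc f)) (x y z : ℝ) :
    px f x y z = fderiv ℝ (unc f) (x, y, z) (1, 0, 0) := (sliceX hf x y z).deriv

lemma py_eq {f : ℝ → ℝ → ℝ → ℝ} (hf : ContDiff ℝ (⊤ : ℕ∞) (unc f)) (x y z : ℝ) :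
    py f x y z = fderiv ℝ (unc f) (x, y, z) (0, 1, 0) := (sliceY hf x y z).deriv

lemma pz_eq {f : ℝ → ℝ → ℝ → ℝ} (hf : ContDiff ℝ (⊤ : ℕ∞) (unc f)) (x y z : ℝ) :
    pz f x y z = fderiv ℝ (unc f) (x, y, z) (0, 0, 1) := (sliceZ hf x y z).deriv

lemma contDiff_fderiv_apply {f : ℝ → ℝ → ℝ → ℝ} (hf : ContDiff ℝ (⊤ : ℕ∞) (unc f)) (v : ℝ × ℝ × ℝ) :
    ContDiff ℝ (⊤ : ℕ∞) (fun p => fderiv ℝ (unc f) p v) :=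
  (hf.fderiv_right (by simp)).clm_apply contDiff_const

lemma unc_px {f : ℝ → ℝ → ℝ → ℝ} (hf : ContDiff ℝ (⊤ : ℕ∞) (unc f)) :
    unc (px f) = fun p => fderiv ℝ (unc f) p (1, 0, 0) := by
  funext p
  exact px_eq hf p.1 p.2.1 p.2.2

lemma unc_py {f : ℝ → ℝ → ℝ → ℝ} (hf : ContDiff ℝ (⊤ : ℕ∞) (unc f)) :
    unc (py f) = fun p => fderiv ℝ (unc f) p (0, 1, 0) := by
  funext p
  exact py_eq hf p.1 p.2.1 p.2.2

lemma unc_pz {f : ℝ → ℝ → ℝ → ℝ} (hf : ContDiff ℝ (⊤ : ℕ∞) (unc f)) :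
    unc (pz f) = fun p => fderiv ℝ (unc f) p (0, 0, 1) := by
  funext p
  exact pz_eq hf p.1 p.2.1 p.2.2

lemma contDiff_unc_px {f : ℝ → ℝ → ℝ → ℝ} (hf : ContDiff ℝ (⊤ : ℕ∞) (unc f)) :
    ContDiff ℝ (⊤ : ℕ∞) (unc (px f)) := by rw [unc_px hf]; exact contDiff_fderiv_apply hf _

lemma contDiff_unc_py {f : ℝ → ℝ → ℝ → ℝ} (hf : ContDiff ℝ (⊤ : ℕ∞) (unc f)) :
    ContDiff ℝ (⊤ : ℕ∞) (unc (py f)) := by rw [unc_py hf]; exact contDiff_fderiv_apply hf _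

lemma contDiff_unc_pz {f : ℝ → ℝ → ℝ → ℝ} (hf : ContDiff ℝ (⊤ : ℕ∞) (unc f)) :
    ContDiff ℝ (⊤ : ℕ∞) (unc (pz f)) := by rw [unc_pz hf]; exact contDiff_fderiv_apply hf _

lemma p_p_eq {f : ℝ → ℝ → ℝ → ℝ} (hf : ContDiff ℝ (⊤ : ℕ∞) (unc f)) (v w : ℝ × ℝ × ℝ) (q : ℝ × ℝ × ℝ) :
    fderiv ℝ (fun p => fderiv ℝ (unc f) p v) q w = fderiv ℝ (fderiv ℝ (unc f)) q w v := by
  rw [fderiv_clm_apply ((hf.fderiv_right (m := (⊤ : ℕ∞)) (by simp)).differentiable (by simp) q)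
    (differentiableAt_const v)]
  simp

lemma symm_zx {f : ℝ → ℝ → ℝ → ℝ} (hf : ContDiff ℝ (⊤ : ℕ∞) (unc f)) (x y z : ℝ) :
    pz (px f) x y z = px (pz f) x y z := by
  rw [pz_eq (contDiff_unc_px hf), px_eq (contDiff_unc_pz hf), unc_px hf, unc_pz hf,
    p_p_eq hf, p_p_eq hf]
  exact (hf.contDiffAt.isSymmSndFDerivAt (by rw [minSmoothness_of_isRCLikeNormedField]; exact WithTop.coe_le_coe.mpr (le_top : (2 : ℕ∞) ≤ ⊤))) _ _

lemma symm_zy {f : ℝ → ℝ → ℝ → ℝ} (hf : ContDiff ℝ (⊤ : ℕ∞) (unc f)) (x y z : ℝ) :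
    pz (py f) x y z = py (pz f) x y z := by
  rw [pz_eq (contDiff_unc_py hf), py_eq (contDiff_unc_pz hf), unc_py hf, unc_pz hf,
    p_p_eq hf, p_p_eq hf]
  exact (hf.contDiffAt.isSymmSndFDerivAt (by rw [minSmoothness_of_isRCLikeNormedField]; exact WithTop.coe_le_coe.mpr (le_top : (2 : ℕ∞) ≤ ⊤))) _ _

lemma hasDerivAt_sliceY {f : ℝ → ℝ → ℝ → ℝ} (hf : ContDiff ℝ (⊤ : ℕ∞) (unc f)) (x y z : ℝ) :
    HasDerivAt (fun t => f x t z) (py f x y z) y := by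
  rw [py_eq hf]; exact sliceY hf x y z

lemma hasDerivAt_sliceX {f : ℝ → ℝ → ℝ → ℝ} (hf : ContDiff ℝ (⊤ : ℕ∞) (unc f)) (x y z : ℝ) :
    HasDerivAt (fun t => f t y z) (px f x y z) x := by
  rw [px_eq hf]; exact sliceX hf x y z

lemma py_congrU {U : Set (ℝ × ℝ × ℝ)} (hU : IsOpen U) {g h : ℝ → ℝ → ℝ → ℝ} {x y z : ℝ}
    (hm : (x, y, z) ∈ U) (he : ∀ a b c, (a, b, c) ∈ U → g a b c = h a b c) :
    py g x y z = py h x y z := by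
  apply Filter.EventuallyEq.deriv_eq
  have hc : ContinuousAt (fun t : ℝ => ((x, t, z) : ℝ × ℝ × ℝ)) y := by fun_prop
  filter_upwards [hc.preimage_mem_nhds (hU.mem_nhds hm)] with t ht
  exact he x t z ht

lemma px_congrU {U : Set (ℝ × ℝ × ℝ)} (hU : IsOpen U) {g h : ℝ → ℝ → ℝ → ℝ} {x y z : ℝ}
    (hm : (x, y, z) ∈ U) (he : ∀ a b c, (a, b, c) ∈ U → g a b c = h a b c) :
    px g x y z = px h x y z := by
  apply Filter.EventuallyEq.deriv_eq
  have hc : ContinuousAt (fun t : ℝ => ((t, y, z) : ℝ × ℝ × ℝ)) x := by fun_prop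
  filter_upwards [hc.preimage_mem_nhds (hU.mem_nhds hm)] with t ht
  exact he t y z ht

theorem stmt_2 (φ ψ A B : ℝ → ℝ → ℝ → ℝ) (U : Set (ℝ × ℝ × ℝ)) (hU : IsOpen U)
    (hφ : ContDiff ℝ (⊤ : ℕ∞) fun p : ℝ × ℝ × ℝ => φ p.1 p.2.1 p.2.2)
    (hψ : ContDiff ℝ (⊤ : ℕ∞) fun p : ℝ × ℝ × ℝ => ψ p.1 p.2.1 p.2.2)
    (hz : ∀ x y z, (x, y, z) ∈ U → pz φ x y z ≠ 0)
    (hsin : ∀ x y z, (x, y, z) ∈ U → sin (φ x y z) ≠ 0)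
    (hcos : ∀ x y z, (x, y, z) ∈ U → cos (φ x y z) ≠ 0)
    (h1 : ∀ x y z, (x, y, z) ∈ U →
      pz (px ψ) x y z = -(pz (px φ) x y z) * (cos (φ x y z) / sin (φ x y z)))
    (h2 : ∀ x y z, (x, y, z) ∈ U →
      pz (py ψ) x y z = pz (py φ) x y z * (sin (φ x y z) / cos (φ x y z)))
    (hA : ∀ x y z, (x, y, z) ∈ U →
      A x y z = -(pz (px φ) x y z) / (pz φ x y z * sin (φ x y z)))
    (hB : ∀ x y z, (x, y, z) ∈ U →
      B x y z = pz (py φ) x y z / (pz φ x y z * cos (φ x y z)))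
    (hintφ : ∀ x y z, (x, y, z) ∈ U →
      py (pz (px φ)) x y z = px (pz (py φ)) x y z)
    (hintψ : ∀ x y z, (x, y, z) ∈ U →
      py (pz (px ψ)) x y z = px (pz (py ψ)) x y z) :
    ∀ x y z, (x, y, z) ∈ U →
      (py A x y z - B x y z * px φ x y z) * sin (φ x y z)
        + (px B x y z + A x y z * py φ x y z) * cos (φ x y z) = 0 ∧
      (py A x y z - B x y z * px φ x y z) * cos (φ x y z)
        - (px B x y z + A x y z * py φ x y z) * sin (φ x y z)
        = -(A x y z * B x y z) := by
  intro x y z hm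
  have hφ' : ContDiff ℝ (⊤ : ℕ∞) (unc φ) := hφ
  have hsZ := hz x y z hm
  have hs := hsin x y z hm
  have hc := hcos x y z hm
  -- slice derivative facts
  have hyφ : HasDerivAt (fun t => φ x t z) (py φ x y z) y := hasDerivAt_sliceY hφ' x y z
  have hxφ : HasDerivAt (fun t => φ t y z) (px φ x y z) x := hasDerivAt_sliceX hφ' x y z
  have hy_pzφ : HasDerivAt (fun t => pz φ x t z) (py (pz φ) x y z) y :=
    hasDerivAt_sliceY (contDiff_unc_pz hφ') x y z
  have hx_pzφ : HasDerivAt (fun t => pz φ t y z) (px (pz φ) x y z) x :=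
    hasDerivAt_sliceX (contDiff_unc_pz hφ') x y z
  have hy_pzpxφ : HasDerivAt (fun t => pz (px φ) x t z) (py (pz (px φ)) x y z) y :=
    hasDerivAt_sliceY (contDiff_unc_pz (contDiff_unc_px hφ')) x y z
  have hx_pzpyφ : HasDerivAt (fun t => pz (py φ) t y z) (px (pz (py φ)) x y z) x :=
    hasDerivAt_sliceX (contDiff_unc_pz (contDiff_unc_py hφ')) x y z
  -- values from hA, hB and symmetry of mixed partials
  have hP : pz (px φ) x y z = -(A x y z * (pz φ x y z * sin (φ x y z))) := by
    have := hA x y z hm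
    field_simp at this ⊢
    linarith [this]
  have hR : pz (py φ) x y z = B x y z * (pz φ x y z * cos (φ x y z)) := by
    have := hB x y z hm
    field_simp at this
    linarith [this]
  have hQy : py (pz φ) x y z = B x y z * (pz φ x y z * cos (φ x y z)) := by
    rw [← symm_zy hφ']; exact hR
  have hQx : px (pz φ) x y z = -(A x y z * (pz φ x y z * sin (φ x y z))) := by
    rw [← symm_zx hφ']; exact hP
  -- compute py A
  have hden_ne : pz φ x y z * sin (φ x y z) ≠ 0 := mul_ne_zero hsZ hs
  have hdA : HasDerivAt (fun t => -(pz (px φ) x t z) / (pz φ x t z * sin (φ x t z)))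
      ((-(py (pz (px φ)) x y z) * (pz φ x y z * sin (φ x y z))
        - -(pz (px φ) x y z) * (py (pz φ) x y z * sin (φ x y z)
            + pz φ x y z * (cos (φ x y z) * py φ x y z)))
        / (pz φ x y z * sin (φ x y z)) ^ 2) y :=
    (hy_pzpxφ.neg).div (hy_pzφ.mul hyφ.sin) hden_ne
  have eA : py A x y z = (-(py (pz (px φ)) x y z) * (pz φ x y z * sin (φ x y z))
        - -(pz (px φ) x y z) * (py (pz φ) x y z * sin (φ x y z)
            + pz φ x y z * (cos (φ x y z) * py φ x y z)))
        / (pz φ x y z * sin (φ x y z)) ^ 2 :=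
    (py_congrU hU hm hA).trans hdA.deriv
  -- compute px B
  have hdenc_ne : pz φ x y z * cos (φ x y z) ≠ 0 := mul_ne_zero hsZ hc
  have hdB : HasDerivAt (fun t => pz (py φ) t y z / (pz φ t y z * cos (φ t y z)))
      ((px (pz (py φ)) x y z * (pz φ x y z * cos (φ x y z))
        - pz (py φ) x y z * (px (pz φ) x y z * cos (φ x y z)
            + pz φ x y z * (-sin (φ x y z) * px φ x y z)))
        / (pz φ x y z * cos (φ x y z)) ^ 2) x :=
    hx_pzpyφ.div (hx_pzφ.mul hxφ.cos) hdenc_ne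
  have eB : px B x y z = (px (pz (py φ)) x y z * (pz φ x y z * cos (φ x y z))
        - pz (py φ) x y z * (px (pz φ) x y z * cos (φ x y z)
            + pz φ x y z * (-sin (φ x y z) * px φ x y z)))
        / (pz φ x y z * cos (φ x y z)) ^ 2 :=
    (px_congrU hU hm hB).trans hdB.deriv
  -- ψ integrability in terms of φ
  have hdψ1 : HasDerivAt (fun t => -(pz (px φ) x t z) * (cos (φ x t z) / sin (φ x t z)))
      (-(py (pz (px φ)) x y z) * (cos (φ x y z) / sin (φ x y z))
        + -(pz (px φ) x y z) * ((-sin (φ x y z) * py φ x y z * sin (φ x y z)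
            - cos (φ x y z) * (cos (φ x y z) * py φ x y z)) / sin (φ x y z) ^ 2)) y :=
    (hy_pzpxφ.neg).mul (hyφ.cos.div hyφ.sin hs)
  have hdψ2 : HasDerivAt (fun t => pz (py φ) t y z * (sin (φ t y z) / cos (φ t y z)))
      (px (pz (py φ)) x y z * (sin (φ x y z) / cos (φ x y z))
        + pz (py φ) x y z * ((cos (φ x y z) * px φ x y z * cos (φ x y z)
            - sin (φ x y z) * (-sin (φ x y z) * px φ x y z)) / cos (φ x y z) ^ 2)) x :=
    hx_pzpyφ.mul (hxφ.sin.div hxφ.cos hc)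
  have eψ : -(py (pz (px φ)) x y z) * (cos (φ x y z) / sin (φ x y z))
        + -(pz (px φ) x y z) * ((-sin (φ x y z) * py φ x y z * sin (φ x y z)
            - cos (φ x y z) * (cos (φ x y z) * py φ x y z)) / sin (φ x y z) ^ 2)
      = px (pz (py φ)) x y z * (sin (φ x y z) / cos (φ x y z))
        + pz (py φ) x y z * ((cos (φ x y z) * px φ x y z * cos (φ x y z)
            - sin (φ x y z) * (-sin (φ x y z) * px φ x y z)) / cos (φ x y z) ^ 2) := by
    have l := (py_congrU hU hm h1).symm.trans ((hintψ x y z hm).trans (px_congrU hU hm h2))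
    exact (hdψ1.deriv.symm.trans l).trans hdψ2.deriv
  have hM : px (pz (py φ)) x y z = py (pz (px φ)) x y z := (hintφ x y z hm).symm
  simp only [hP, hQy, hQx, hR, hM] at eA eB eψ
  set M := py (pz (px φ)) x y z
  set Av := A x y z
  set Bv := B x y z
  set Z := pz φ x y z
  set s := sin (φ x y z)
  set c := cos (φ x y z)
  set fx := px φ x y z
  set fy := py φ x y z
  have hsc : s ^ 2 + c ^ 2 = 1 := sin_sq_add_cos_sq _
  have eAc : py A x y z * (Z * s) ^ 2
      = -M * (Z * s) - Av * (Z * s) * (Bv * (Z * c) * s + Z * (c * fy)) := by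
    rw [eA]; field_simp
  have eBc : px B x y z * (Z * c) ^ 2
      = M * (Z * c) - Bv * (Z * c) * (-(Av * (Z * s)) * c + Z * (-s * fx)) := by
    rw [eB]; field_simp
  field_simp at eψ
  constructor
  · have g1 : ((py A x y z - Bv * fx) * s + (px B x y z + Av * fy) * c)
        * (Z ^ 2 * s ^ 2 * c ^ 2) = 0 := by
      linear_combination (c ^ 2 * s) * eAc + (s ^ 2 * c) * eBc
    have hne1 : Z ^ 2 * s ^ 2 * c ^ 2 ≠ 0 := by
      apply mul_ne_zero (mul_ne_zero (pow_ne_zero _ hsZ) (pow_ne_zero _ hs)) (pow_ne_zero _ hc)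
    exact (mul_eq_zero.mp g1).resolve_right hne1
  · have g2 : ((py A x y z - Bv * fx) * c - (px B x y z + Av * fy) * s + Av * Bv)
        * (Z ^ 2 * s ^ 3 * c ^ 3) = 0 := by
      linear_combination (s * c ^ 4) * eAc - (s ^ 4 * c) * eBc + (Z * c ^ 2 * s ^ 2) * eψ
        - Av * Bv * Z ^ 2 * s ^ 3 * c ^ 3 * hsc
    have hne2 : Z ^ 2 * s ^ 3 * c ^ 3 ≠ 0 := by
      apply mul_ne_zero (mul_ne_zero (pow_ne_zero _ hsZ) (pow_ne_zero _ hs)) (pow_ne_zero _ hc)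
    have := (mul_eq_zero.mp g2).resolve_right hne2
    linarith
end

section
/- Let Â, B̂ be smooth positive functions of (x,y) on a simply connected domain such that the metric ĝ = Â² dx² + B̂² dy² has constant Gauss curvature -1, i.e. (B̂_x/Â)_x + (Â_y/B̂)_y = ÂB̂. Suppose φ is a smooth function satisfying φ_x = Â_y/B̂ + Â cos φ and φ_y = -B̂_x/Â + B̂ sin φ. Then the 1-form (-Â sin φ) dx + (B̂ cos φ) dy is closed, i.e. (-Â sin φ)_y = (B̂ cos φ)_x. -/
open Real

noncomputable def px2 (f : ℝ → ℝ → ℝ) (x y : ℝ) : ℝ := deriv (fun t => f t y) x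
noncomputable def py2 (f : ℝ → ℝ → ℝ) (x y : ℝ) : ℝ := deriv (fun t => f x t) y

theorem stmt_5 (A B φ : ℝ → ℝ → ℝ) (U : Set (ℝ × ℝ)) (hU : IsOpen U)
    (hUconn : IsPreconnected U)
    (hA : ContDiff ℝ (⊤ : ℕ∞) fun p : ℝ × ℝ => A p.1 p.2)
    (hB : ContDiff ℝ (⊤ : ℕ∞) fun p : ℝ × ℝ => B p.1 p.2)
    (hφ : ContDiff ℝ (⊤ : ℕ∞) fun p : ℝ × ℝ => φ p.1 p.2)
    (hApos : ∀ x y, (x, y) ∈ U → 0 < A x y)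
    (hBpos : ∀ x y, (x, y) ∈ U → 0 < B x y)
    (hK : ∀ x y, (x, y) ∈ U →
      px2 (fun a b => px2 B a b / A a b) x y
        + py2 (fun a b => py2 A a b / B a b) x y = A x y * B x y)
    (h1 : ∀ x y, (x, y) ∈ U →
      px2 φ x y = py2 A x y / B x y + A x y * cos (φ x y))
    (h2 : ∀ x y, (x, y) ∈ U →
      py2 φ x y = -(px2 B x y / A x y) + B x y * sin (φ x y)) :
    ∀ x y, (x, y) ∈ U →
      py2 (fun a b => -(A a b * sin (φ a b))) x y
        = px2 (fun a b => B a b * cos (φ a b)) x y := by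
  intro x y hxy
  have dA : Differentiable ℝ (fun p : ℝ × ℝ => A p.1 p.2) := hA.differentiable (by simp)
  have dB : Differentiable ℝ (fun p : ℝ × ℝ => B p.1 p.2) := hB.differentiable (by simp)
  have dφ : Differentiable ℝ (fun p : ℝ × ℝ => φ p.1 p.2) := hφ.differentiable (by simp)
  -- derivatives in y
  have hAy : HasDerivAt (fun t => A x t) (py2 A x y) y :=
    (((dA (x, y)).comp y ((differentiableAt_const x).prodMk differentiableAt_id)).hasDerivAt)
  have hφy : HasDerivAt (fun t => φ x t) (py2 φ x y) y :=
    (((dφ (x, y)).comp y ((differentiableAt_const x).prodMk differentiableAt_id)).hasDerivAt)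
  have hBx : HasDerivAt (fun t => B t y) (px2 B x y) x :=
    by have := (((dB (x, y)).comp x (differentiableAt_fun_id.prodMk (differentiableAt_const y))).hasDerivAt); exact this
  have hφx : HasDerivAt (fun t => φ t y) (px2 φ x y) x :=
    by have := (((dφ (x, y)).comp x (differentiableAt_fun_id.prodMk (differentiableAt_const y))).hasDerivAt); exact this
  have hsin : HasDerivAt (fun t => Real.sin (φ x t)) (Real.cos (φ x y) * py2 φ x y) y :=
    (Real.hasDerivAt_sin (φ x y)).comp y hφy
  have hcos : HasDerivAt (fun t => Real.cos (φ t y)) (-Real.sin (φ x y) * px2 φ x y) x :=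
    by have := (Real.hasDerivAt_cos (φ x y)).comp x hφx; exact this
  have eL : py2 (fun a b => -(A a b * Real.sin (φ a b))) x y
      = -(py2 A x y * Real.sin (φ x y) + A x y * (Real.cos (φ x y) * py2 φ x y)) :=
    ((hAy.mul hsin).neg).deriv
  have eR : px2 (fun a b => B a b * Real.cos (φ a b)) x y
      = px2 B x y * Real.cos (φ x y) + B x y * (-Real.sin (φ x y) * px2 φ x y) :=
    (hBx.mul hcos).deriv
  rw [eL, eR, h1 x y hxy, h2 x y hxy]
  have hA0 : A x y ≠ 0 := (hApos x y hxy).ne'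
  have hB0 : B x y ≠ 0 := (hBpos x y hxy).ne'
  field_simp
  ring
end

section
/- Let X, Y : (0,∞) → ℝ be smooth functions and c a real constant such that 8 X''(x) x² y² + 2 Y''(y) (x² - y²)² = (8 + c²) y² for all x, y > 0. Then Y'' ≡ 0 and X''(x) = (1 + c²/8)/x² for all x > 0. -/
open Real

theorem stmt_10 (X Y : ℝ → ℝ) (c : ℝ)
    (hX : ContDiffOn ℝ (⊤ : ℕ∞) X (Set.Ioi 0))
    (hY : ContDiffOn ℝ (⊤ : ℕ∞) Y (Set.Ioi 0))
    (h : ∀ x y : ℝ, 0 < x → 0 < y →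
      8 * deriv (deriv X) x * x ^ 2 * y ^ 2
        + 2 * deriv (deriv Y) y * (x ^ 2 - y ^ 2) ^ 2 = (8 + c ^ 2) * y ^ 2) :
    (∀ y : ℝ, 0 < y → deriv (deriv Y) y = 0) ∧
    (∀ x : ℝ, 0 < x → deriv (deriv X) x = (1 + c ^ 2 / 8) / x ^ 2) := by
  have hXd : ∀ x : ℝ, 0 < x → deriv (deriv X) x = (1 + c ^ 2 / 8) / x ^ 2 := by
    intro x hx
    have h1 := h x x hx hx
    have hx2 : x ^ 2 ≠ 0 := pow_ne_zero _ hx.ne'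
    field_simp at h1 ⊢
    nlinarith [sq_nonneg x]
  refine ⟨?_, hXd⟩
  intro y hy
  have h1 := h (y + 1) y (by linarith) hy
  rw [hXd (y + 1) (by linarith)] at h1
  have hy1 : (y + 1 : ℝ) ^ 2 ≠ 0 := pow_ne_zero _ (by linarith)
  have h2 : 2 * deriv (deriv Y) y * ((y + 1) ^ 2 - y ^ 2) ^ 2 = 0 := by
    field_simp at h1
    nlinarith [h1]
  have h3 : ((y + 1) ^ 2 - y ^ 2) ^ 2 > 0 := by nlinarith [sq_nonneg y, hy]
  nlinarith [h2, h3, sq_nonneg (deriv (deriv Y) y)]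
end

section
/- Let g be a smooth one-variable function with g'' = α·sin 2g and (g')² = β - α·cos 2g for constants α, β, and let a, b, c be nonzero constants. Define φ(x,y,z) := g(ax+by+cz) and ψ(x,y,z) := -ac(α+β)xz + bc(α-β)yz + (c₁/2)x² + (c₂/2)y² + (c₃/2)z² + F(ax+by+cz), where F''(t) = g'(t)², 2c₁ = (α+β)(-a²+b²+c²), 2c₂ = (α-β)(-a²+b²-c²), c₃ = -(c₁+c₂). Then ψ_{zz} = (φ_{xx} - φ_{yy})·sin 2φ - (ψ_{xx} - ψ_{yy})·cos 2φ. -/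
open Real

lemma key_second_deriv (h : ℝ → ℝ) (hh : ContDiff ℝ (⊤ : ℕ∞) h) (A q r a k x : ℝ) :
    deriv (deriv (fun t => A * t + q * t ^ 2 + r + h (a * t + k))) x
      = 2 * q + a ^ 2 * deriv (deriv h) (a * x + k) := by
  have hlin : ∀ t : ℝ, HasDerivAt (fun s : ℝ => a * s + k) a t := by
    intro t
    simpa using ((hasDerivAt_id t).const_mul a).add_const k
  have hd1 : ∀ t : ℝ, HasDerivAt (fun s => A * s + q * s ^ 2 + r + h (a * s + k))
      (A + 2 * q * t + a * deriv h (a * t + k)) t := by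
    intro t
    have h2 := ((hh.differentiable (by simp) (a * t + k)).hasDerivAt).comp t (hlin t)
    have h3 := ((((hasDerivAt_id t).const_mul A).add
      ((hasDerivAt_pow 2 t).const_mul q)).add_const r).add h2
    refine h3.congr_deriv ?_
    ring
  have e1 : deriv (fun t => A * t + q * t ^ 2 + r + h (a * t + k))
      = fun t => A + 2 * q * t + a * deriv h (a * t + k) :=
    funext fun t => (hd1 t).deriv
  rw [e1]
  have hh' : ContDiff ℝ (⊤ : ℕ∞) (deriv h) := (contDiff_infty_iff_deriv.mp (hh.of_le (by simp))).2
  have hdiff : Differentiable ℝ (deriv h) := hh'.differentiable (by simp)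
  have hd2 : HasDerivAt (fun t => A + 2 * q * t + a * deriv h (a * t + k))
      (2 * q + a ^ 2 * deriv (deriv h) (a * x + k)) x := by
    have h2 := ((hdiff (a * x + k)).hasDerivAt).comp x (hlin x)
    have h2' : HasDerivAt (fun t => a * deriv h (a * t + k))
        (a * (deriv (deriv h) (a * x + k) * a)) x := by
      simpa [Function.comp] using h2.const_mul a
    have h5 : HasDerivAt (fun t : ℝ => 2 * q * t) (2 * q) x := by
      simpa using (hasDerivAt_id x).const_mul (2 * q)
    have h6 := (h5.const_add A).add h2'
    refine h6.congr_deriv ?_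
    ring
  exact hd2.deriv

theorem stmt_17 (g F : ℝ → ℝ) (α β a b c c₁ c₂ c₃ : ℝ)
    (hg : ContDiff ℝ (⊤ : ℕ∞) g) (hF : ContDiff ℝ (⊤ : ℕ∞) F)
    (ha : a ≠ 0) (hb : b ≠ 0) (hc : c ≠ 0)
    (hg2 : ∀ t, deriv (deriv g) t = α * sin (2 * g t))
    (hg1 : ∀ t, (deriv g t) ^ 2 = β - α * cos (2 * g t))
    (hF2 : ∀ t, deriv (deriv F) t = (deriv g t) ^ 2)
    (hc₁ : 2 * c₁ = (α + β) * (-a ^ 2 + b ^ 2 + c ^ 2))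
    (hc₂ : 2 * c₂ = (α - β) * (-a ^ 2 + b ^ 2 - c ^ 2))
    (hc₃ : c₃ = -(c₁ + c₂))
    (φ ψ : ℝ → ℝ → ℝ → ℝ)
    (hφ : ∀ x y z, φ x y z = g (a * x + b * y + c * z))
    (hψ : ∀ x y z, ψ x y z = -(a * c * (α + β)) * x * z + b * c * (α - β) * y * z
      + (c₁ / 2) * x ^ 2 + (c₂ / 2) * y ^ 2 + (c₃ / 2) * z ^ 2
      + F (a * x + b * y + c * z)) :
    ∀ x y z,
      pz (pz ψ) x y z = (px (px φ) x y z - py (py φ) x y z) * sin (2 * φ x y z)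
        - (px (px ψ) x y z - py (py ψ) x y z) * cos (2 * φ x y z) := by
  intro x y z
  have Pφx : px (px φ) x y z = a ^ 2 * deriv (deriv g) (a * x + b * y + c * z) := by
    have e : (fun s => φ s y z)
        = fun t => (0:ℝ) * t + 0 * t ^ 2 + 0 + g (a * t + (b * y + c * z)) := by
      funext t
      rw [hφ, show a * t + b * y + c * z = a * t + (b * y + c * z) by ring]
      ring
    show deriv (deriv (fun s => φ s y z)) x = _
    rw [e, key_second_deriv g hg 0 0 0 a (b * y + c * z) x,
      show a * x + (b * y + c * z) = a * x + b * y + c * z by ring]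
    ring
  have Pφy : py (py φ) x y z = b ^ 2 * deriv (deriv g) (a * x + b * y + c * z) := by
    have e : (fun s => φ x s z)
        = fun t => (0:ℝ) * t + 0 * t ^ 2 + 0 + g (b * t + (a * x + c * z)) := by
      funext t
      rw [hφ, show a * x + b * t + c * z = b * t + (a * x + c * z) by ring]
      ring
    show deriv (deriv (fun s => φ x s z)) y = _
    rw [e, key_second_deriv g hg 0 0 0 b (a * x + c * z) y,
      show b * y + (a * x + c * z) = a * x + b * y + c * z by ring]
    ring
  have Pψx : px (px ψ) x y z = c₁ + a ^ 2 * deriv (deriv F) (a * x + b * y + c * z) := by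
    have e : (fun s => ψ s y z)
        = fun t => (-(a * c * (α + β)) * z) * t + (c₁ / 2) * t ^ 2
          + (b * c * (α - β) * y * z + (c₂ / 2) * y ^ 2 + (c₃ / 2) * z ^ 2)
          + F (a * t + (b * y + c * z)) := by
      funext t
      rw [hψ, show a * t + b * y + c * z = a * t + (b * y + c * z) by ring]
      ring
    show deriv (deriv (fun s => ψ s y z)) x = _
    rw [e, key_second_deriv F hF _ _ _ a (b * y + c * z) x,
      show a * x + (b * y + c * z) = a * x + b * y + c * z by ring]
    ring
  have Pψy : py (py ψ) x y z = c₂ + b ^ 2 * deriv (deriv F) (a * x + b * y + c * z) := by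
    have e : (fun s => ψ x s z)
        = fun t => (b * c * (α - β) * z) * t + (c₂ / 2) * t ^ 2
          + (-(a * c * (α + β)) * x * z + (c₁ / 2) * x ^ 2 + (c₃ / 2) * z ^ 2)
          + F (b * t + (a * x + c * z)) := by
      funext t
      rw [hψ, show a * x + b * t + c * z = b * t + (a * x + c * z) by ring]
      ring
    show deriv (deriv (fun s => ψ x s z)) y = _
    rw [e, key_second_deriv F hF _ _ _ b (a * x + c * z) y,
      show b * y + (a * x + c * z) = a * x + b * y + c * z by ring]
    ring
  have Pψz : pz (pz ψ) x y z = c₃ + c ^ 2 * deriv (deriv F) (a * x + b * y + c * z) := by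
    have e : (fun s => ψ x y s)
        = fun t => (-(a * c * (α + β)) * x + b * c * (α - β) * y) * t + (c₃ / 2) * t ^ 2
          + ((c₁ / 2) * x ^ 2 + (c₂ / 2) * y ^ 2)
          + F (c * t + (a * x + b * y)) := by
      funext t
      rw [hψ, show a * x + b * y + c * t = c * t + (a * x + b * y) by ring]
      ring
    show deriv (deriv (fun s => ψ x y s)) z = _
    rw [e, key_second_deriv F hF _ _ _ c (a * x + b * y) z,
      show c * z + (a * x + b * y) = a * x + b * y + c * z by ring]
    ring
  rw [Pφx, Pφy, Pψx, Pψy, Pψz, hφ x y z]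
  set s := a * x + b * y + c * z with hs
  rw [hF2 s, hg1 s, hg2 s]
  have hpyth := sin_sq_add_cos_sq (2 * g s)
  linear_combination hc₃ + ((cos (2 * g s) - 1) / 2) * hc₁
    + ((-cos (2 * g s) - 1) / 2) * hc₂ + α * (b ^ 2 - a ^ 2) * hpyth
end

section
/- Let g be a smooth one-variable function with g'' = α sin 2g and (g')² = β - α cos 2g, let a,b,c be nonzero constants, and define φ, ψ as in the Bianchi-type example (with F'' = (g')², 2c₁ = (α+β)(-a²+b²+c²), 2c₂ = (α-β)(-a²+b²-c²)). Then ψ_{xz} = -φ_{xz}·cot φ and ψ_{yz} = φ_{yz}·tan φ at all points where sin g ≠ 0 and cos g ≠ 0; explicitly, ψ_{xz} = -ac[(α+β) - (g')²] and ψ_{yz} = bc[(α-β) + (g')²] evaluated at t = ax+by+cz. -/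
open Real

lemma comp_hasDerivAt {f u : ℝ → ℝ} {k x : ℝ} (hf : Differentiable ℝ f)
    (hu : HasDerivAt u k x) :
    HasDerivAt (fun t => f (u t)) (k * deriv f (u x)) x := by
  have h := (hf (u x)).hasDerivAt.comp x hu
  rw [mul_comm] at h
  exact h

theorem stmt_18 (g F : ℝ → ℝ) (α β a b c c₁ c₂ c₃ : ℝ)
    (hg : ContDiff ℝ (⊤ : ℕ∞) g) (hF : ContDiff ℝ (⊤ : ℕ∞) F)
    (ha : a ≠ 0) (hb : b ≠ 0) (hc : c ≠ 0)
    (hg2 : ∀ t, deriv (deriv g) t = α * sin (2 * g t))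
    (hg1 : ∀ t, (deriv g t) ^ 2 = β - α * cos (2 * g t))
    (hF2 : ∀ t, deriv (deriv F) t = (deriv g t) ^ 2)
    (hc₁ : 2 * c₁ = (α + β) * (-a ^ 2 + b ^ 2 + c ^ 2))
    (hc₂ : 2 * c₂ = (α - β) * (-a ^ 2 + b ^ 2 - c ^ 2))
    (hc₃ : c₃ = -(c₁ + c₂))
    (φ ψ : ℝ → ℝ → ℝ → ℝ)
    (hφ : ∀ x y z, φ x y z = g (a * x + b * y + c * z))
    (hψ : ∀ x y z, ψ x y z = -(a * c * (α + β)) * x * z + b * c * (α - β) * y * z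
      + (c₁ / 2) * x ^ 2 + (c₂ / 2) * y ^ 2 + (c₃ / 2) * z ^ 2
      + F (a * x + b * y + c * z)) :
    ∀ x y z, sin (g (a * x + b * y + c * z)) ≠ 0 →
      cos (g (a * x + b * y + c * z)) ≠ 0 →
      pz (px ψ) x y z = -(pz (px φ) x y z) * (cos (φ x y z) / sin (φ x y z)) ∧
      pz (py ψ) x y z = pz (py φ) x y z * (sin (φ x y z) / cos (φ x y z)) ∧
      pz (px ψ) x y z = -(a * c * ((α + β) - (deriv g (a * x + b * y + c * z)) ^ 2)) ∧
      pz (py ψ) x y z = b * c * ((α - β) + (deriv g (a * x + b * y + c * z)) ^ 2) := by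
  have hgd : Differentiable ℝ g := hg.differentiable (by simp)
  have hg'd : Differentiable ℝ (deriv g) :=
    ((contDiff_infty_iff_deriv.mp (hg.of_le (by simp))).2).differentiable (by simp)
  have hFd : Differentiable ℝ F := hF.differentiable (by simp)
  have hF'd : Differentiable ℝ (deriv F) :=
    ((contDiff_infty_iff_deriv.mp (hF.of_le (by simp))).2).differentiable (by simp)
  -- inner affine maps
  have hinx : ∀ x y z : ℝ, HasDerivAt (fun t : ℝ => a * t + b * y + c * z) a x := by
    intro x y z
    simpa using (((hasDerivAt_id x).const_mul a).add_const (b * y)).add_const (c * z)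
  have hiny : ∀ x y z : ℝ, HasDerivAt (fun t : ℝ => a * x + b * t + c * z) b y := by
    intro x y z
    simpa using (((hasDerivAt_id y).const_mul b).const_add (a * x)).add_const (c * z)
  have hinz : ∀ x y z : ℝ, HasDerivAt (fun t : ℝ => a * x + b * y + c * t) c z := by
    intro x y z
    simpa using ((hasDerivAt_id z).const_mul c).const_add (a * x + b * y)
  -- first partials of φ
  have hpxφ : ∀ x y z, px φ x y z = a * deriv g (a * x + b * y + c * z) := by
    intro x y z
    have : (fun t => φ t y z) = fun t => g (a * t + b * y + c * z) := by
      funext t; rw [hφ]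
    rw [px, this]
    exact (comp_hasDerivAt hgd (hinx x y z)).deriv
  have hpyφ : ∀ x y z, py φ x y z = b * deriv g (a * x + b * y + c * z) := by
    intro x y z
    have : (fun t => φ x t z) = fun t => g (a * x + b * t + c * z) := by
      funext t; rw [hφ]
    rw [py, this]
    exact (comp_hasDerivAt hgd (hiny x y z)).deriv
  -- first partials of ψ
  have hpxψ : ∀ x y z, px ψ x y z =
      -(a * c * (α + β)) * z + c₁ * x + a * deriv F (a * x + b * y + c * z) := by
    intro x y z
    have hfun : (fun t => ψ t y z) = fun t =>
        -(a * c * (α + β)) * t * z + b * c * (α - β) * y * z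
        + (c₁ / 2) * t ^ 2 + (c₂ / 2) * y ^ 2 + (c₃ / 2) * z ^ 2
        + F (a * t + b * y + c * z) := by
      funext t; rw [hψ]
    rw [px, hfun]
    have p1 : HasDerivAt (fun t : ℝ => -(a * c * (α + β)) * t * z)
        (-(a * c * (α + β)) * z) x := by
      simpa using ((hasDerivAt_id x).const_mul (-(a * c * (α + β)))).mul_const z
    have p3 : HasDerivAt (fun t : ℝ => (c₁ / 2) * t ^ 2) (c₁ / 2 * (2 * x ^ 1)) x :=
      (hasDerivAt_pow 2 x).const_mul (c₁ / 2)
    have pF := comp_hasDerivAt hFd (hinx x y z)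
    have := (((((p1.add (hasDerivAt_const x (b * c * (α - β) * y * z))).add p3).add
      (hasDerivAt_const x ((c₂ / 2) * y ^ 2))).add
      (hasDerivAt_const x ((c₃ / 2) * z ^ 2))).add pF).deriv
    exact this.trans (by ring)
  have hpyψ : ∀ x y z, py ψ x y z =
      b * c * (α - β) * z + c₂ * y + b * deriv F (a * x + b * y + c * z) := by
    intro x y z
    have hfun : (fun t => ψ x t z) = fun t =>
        -(a * c * (α + β)) * x * z + b * c * (α - β) * t * z
        + (c₁ / 2) * x ^ 2 + (c₂ / 2) * t ^ 2 + (c₃ / 2) * z ^ 2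
        + F (a * x + b * t + c * z) := by
      funext t; rw [hψ]
    rw [py, hfun]
    have p2 : HasDerivAt (fun t : ℝ => b * c * (α - β) * t * z)
        (b * c * (α - β) * z) y := by
      simpa using ((hasDerivAt_id y).const_mul (b * c * (α - β))).mul_const z
    have p4 : HasDerivAt (fun t : ℝ => (c₂ / 2) * t ^ 2) (c₂ / 2 * (2 * y ^ 1)) y :=
      (hasDerivAt_pow 2 y).const_mul (c₂ / 2)
    have pF := comp_hasDerivAt hFd (hiny x y z)
    have := ((((((hasDerivAt_const y (-(a * c * (α + β)) * x * z)).add p2).add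
      (hasDerivAt_const y ((c₁ / 2) * x ^ 2))).add p4).add
      (hasDerivAt_const y ((c₃ / 2) * z ^ 2))).add pF).deriv
    exact this.trans (by ring)
  -- second partials
  have hpzpxφ : ∀ x y z, pz (px φ) x y z =
      a * c * (α * sin (2 * g (a * x + b * y + c * z))) := by
    intro x y z
    have hfun : (fun s => px φ x y s) = fun s => a * deriv g (a * x + b * y + c * s) := by
      funext s; rw [hpxφ]
    rw [pz, hfun]
    have := ((comp_hasDerivAt hg'd (hinz x y z)).const_mul a).deriv
    rw [this, hg2]; ring
  have hpzpyφ : ∀ x y z, pz (py φ) x y z =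
      b * c * (α * sin (2 * g (a * x + b * y + c * z))) := by
    intro x y z
    have hfun : (fun s => py φ x y s) = fun s => b * deriv g (a * x + b * y + c * s) := by
      funext s; rw [hpyφ]
    rw [pz, hfun]
    have := ((comp_hasDerivAt hg'd (hinz x y z)).const_mul b).deriv
    rw [this, hg2]; ring
  have hpzpxψ : ∀ x y z, pz (px ψ) x y z =
      -(a * c * ((α + β) - (deriv g (a * x + b * y + c * z)) ^ 2)) := by
    intro x y z
    have hfun : (fun s => px ψ x y s) = fun s =>
        -(a * c * (α + β)) * s + c₁ * x + a * deriv F (a * x + b * y + c * s) := by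
      funext s; rw [hpxψ]
    rw [pz, hfun]
    have p1 : HasDerivAt (fun s : ℝ => -(a * c * (α + β)) * s) (-(a * c * (α + β))) z := by
      simpa using (hasDerivAt_id z).const_mul (-(a * c * (α + β)))
    have pF := (comp_hasDerivAt hF'd (hinz x y z)).const_mul a
    have := ((p1.add_const (c₁ * x)).add pF).deriv
    rw [hF2] at this; exact this.trans (by ring)
  have hpzpyψ : ∀ x y z, pz (py ψ) x y z =
      b * c * ((α - β) + (deriv g (a * x + b * y + c * z)) ^ 2) := by
    intro x y z
    have hfun : (fun s => py ψ x y s) = fun s =>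
        b * c * (α - β) * s + c₂ * y + b * deriv F (a * x + b * y + c * s) := by
      funext s
      rw [hpyψ]
    rw [pz, hfun]
    have p1 : HasDerivAt (fun s : ℝ => b * c * (α - β) * s) (b * c * (α - β)) z := by
      simpa using (hasDerivAt_id z).const_mul (b * c * (α - β))
    have pF := (comp_hasDerivAt hF'd (hinz x y z)).const_mul b
    have := ((p1.add_const (c₂ * y)).add pF).deriv
    rw [hF2] at this; exact this.trans (by ring)
  intro x y z hsin hcos
  set t := a * x + b * y + c * z with ht
  refine ⟨?_, ?_, hpzpxψ x y z, hpzpyψ x y z⟩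
  · rw [hpzpxψ, hpzpxφ, hφ, ← ht]
    have h1 := hg1 t
    rw [sin_two_mul, cos_two_mul] at *
    field_simp
    linear_combination h1
  · rw [hpzpyψ, hpzpyφ, hφ, ← ht]
    have h1 := hg1 t
    rw [sin_two_mul, cos_two_mul] at *
    field_simp
    linear_combination h1 - 2 * α * (sin_sq_add_cos_sq (g t))
end
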